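/- arXiv:2002.03458 — 5 statements merged into one kernel-verified Lean document; each statement's English description precedes it below -/
import Mathlib

section
/- Fix integers U, L, s, g with 1 ≤ s < U, g ≥ 0 and s + g + 1 ≤ L. The number of functions f : {1,…,U} → {1,…,L} such that each of the levels 1,…,s+g contains at most one packet, exactly s of these s+g levels contain exactly one packet (so g of them are empty), and level s+g+1 contains at least two packets, equals C(U,s)·s!·C(s+g,s)·[ (L−s−g)^{U−s} − (L−s−g−1)^{U−s} − (U−s)·(L−s−g−1)^{U−s−1} ] (equation (6) in Appendix A: the probability P(S_{i,g}|U_i) of exactly s successful packets with g idle power levels above the first power collision, multiplied by L^U). -/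
/-- Number of packets (arguments) mapped to power level `l` by `f`.
Levels are indexed `0, …, L-1` from highest to lowest received power
(index `i` corresponds to the paper's level `i+1`). -/
def levelCount {U L : ℕ} (f : Fin U → Fin L) (l : Fin L) : ℕ :=
  (Finset.univ.filter (fun u => f u = l)).card

/-!
With `n = s + g`, let `S` be the set of packets sent to the top `n` levels. Once every top level
holds at most one packet, the number of top levels holding exactly one packet is `|S|`, so the
conditions say: `|S| = s`, `f` is injective on `S`, and level `n` receives at least two of the
packets outside `S`, all of which go to the `L - n` lower levels. Splitting `f` into its
restrictions to `S` and to its complement, an assignment is an injection of `S` into the top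
levels (`s! C(n, s)` choices) together with a map of the other `U - s` packets to the lower
levels that hits level `n` at least twice; the latter are all `(L - n)^(U - s)` maps minus those
hitting level `n` never or exactly once.
-/

open Finset Fintype

section FiberCount

variable {α β : Type*} [Fintype α] [DecidableEq β]

theorem Set.injOn_iff_card_fiber_le_one {p : β → Prop} {f : α → β} {S : Finset α}
    (hS : ∀ a, p (f a) ↔ a ∈ S) : Set.InjOn f S ↔ ∀ c, p c → #{a | f a = c} ≤ 1 := by
  simp only [card_le_one, mem_filter, Finset.mem_univ, true_and]
  constructor
  · rintro hinj c hc x rfl y hy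
    exact hinj ((hS x).1 hc) ((hS y).1 (hy ▸ hc)) hy.symm
  · intro h x hx y hy hxy
    exact h (f x) ((hS x).2 hx) x rfl y hxy.symm

theorem card_filter_card_fiber_eq_one [Fintype β] {p : β → Prop} [DecidablePred p]
    {f : α → β} (h : ∀ c, p c → #{a | f a = c} ≤ 1) :
    #{c | p c ∧ #{a | f a = c} = 1} = #{a | p (f a)} := by
  have hinj := (Set.injOn_iff_card_fiber_le_one (S := univ.filter fun a => p (f a)) (by simp)).2 h
  rw [← card_image_of_injOn hinj]
  congr 1
  ext c
  simp only [mem_filter, mem_image, Finset.mem_univ, true_and]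
  constructor
  · rintro ⟨hc, hone⟩
    obtain ⟨a, ha⟩ := card_pos.1 (hone ▸ one_pos)
    exact ⟨a, ((mem_filter.1 ha).2 ▸ hc), (mem_filter.1 ha).2⟩
  · rintro ⟨a, ha, rfl⟩
    exact ⟨ha, le_antisymm (h _ ha) (card_pos.2 ⟨a, by simp⟩)⟩

variable [DecidableEq α] [Fintype β]

theorem card_filter_fiber_eq (b : β) (T : Finset α) :
    #{f : α → β | univ.filter (f · = b) = T} = (card β - 1) ^ (card α - #T) := by
  have hpi : ({f : α → β | univ.filter (f · = b) = T} : Finset _)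
      = piFinset fun a => if a ∈ T then {b} else univ.erase b := by
    ext f
    simp only [Finset.ext_iff, mem_filter, mem_univ, true_and, mem_piFinset]
    refine forall_congr' fun a => ?_
    split_ifs with ha <;> simp [ha]
  rw [hpi, card_piFinset]
  simp only [apply_ite card, card_singleton, card_erase_of_mem (mem_univ b), card_univ]
  rw [prod_ite, prod_const_one, one_mul, prod_const, filter_notMem_eq_sdiff, card_univ_sdiff]

theorem card_filter_card_fiber_eq (b : β) (k : ℕ) :
    #{f : α → β | #{a | f a = b} = k} = (card α).choose k * (card β - 1) ^ (card α - k) := by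
  have hchoose : (card α).choose k = #(powersetCard k (univ : Finset α)) := by
    rw [card_powersetCard, card_univ]
  rw [card_eq_sum_card_fiberwise (f := fun f => univ.filter (f · = b))
    (t := powersetCard k univ) (fun f hf => by simpa using hf), hchoose, ← smul_eq_mul]
  refine sum_eq_card_nsmul fun T hT => ?_
  rw [mem_powersetCard_univ] at hT
  rw [filter_filter, ← hT, ← card_filter_fiber_eq b T]
  exact congrArg card (filter_congr fun f _ => ⟨fun h => h.2, fun h => ⟨h ▸ rfl, h⟩⟩)

theorem card_filter_two_le_card_fiber (b : β) :
    (#{f : α → β | 2 ≤ #{a | f a = b}} : ℤ)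
      = (card β : ℤ) ^ card α - ((card β : ℤ) - 1) ^ card α
        - card α * ((card β : ℤ) - 1) ^ (card α - 1) := by
  have hβ : 1 ≤ card β := card_pos_iff.2 ⟨b⟩
  have hsplit : ∀ f : α → β, (if 2 ≤ #{a | f a = b} then 1 else 0 : ℤ)
      = 1 - (if #{a | f a = b} = 0 then 1 else 0) - (if #{a | f a = b} = 1 then 1 else 0) := by
    intro f; split_ifs <;> omega
  have h0 := card_filter_card_fiber_eq (α := α) b 0
  have h1 := card_filter_card_fiber_eq (α := α) b 1
  rw [natCast_card_filter, sum_congr rfl fun f _ => hsplit f, sum_sub_distrib, sum_sub_distrib,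
    ← natCast_card_filter, ← natCast_card_filter, h0, h1]
  simp [Nat.cast_sub hβ]

def preimageSplitEquiv (p : β → Prop) (S : Finset α) :
    {f : α → β // ∀ a, p (f a) ↔ a ∈ S} ≃
      ({a // a ∈ S} → {b // p b}) × ({a // a ∉ S} → {b // ¬ p b}) where
  toFun f := (fun x => ⟨f.1 x, (f.2 x).2 x.2⟩, fun x => ⟨f.1 x, fun h => x.2 ((f.2 x).1 h)⟩)
  invFun q := ⟨fun a => if h : a ∈ S then q.1 ⟨a, h⟩ else q.2 ⟨a, h⟩, fun a => by
    by_cases h : a ∈ S <;> simp [h, (q.1 _).2, (q.2 _).2]⟩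
  left_inv f := by ext a; by_cases h : a ∈ S <;> simp [h]
  right_inv q := by ext x <;> simp [x.2]

theorem card_filter_preimage_eq_injOn_two_le (p : β → Prop) [DecidablePred p] (b : β)
    (hb : ¬ p b) (S : Finset α) :
    #{f : α → β | (∀ a, p (f a) ↔ a ∈ S) ∧ Set.InjOn f S ∧ 2 ≤ #{a | f a = b}}
      = (card {b // p b}).descFactorial #S
        * #{h : {a // a ∉ S} → {b // ¬ p b} | 2 ≤ #{x | h x = ⟨b, hb⟩}} := by
  have hinj (f : {f : α → β // ∀ a, p (f a) ↔ a ∈ S}) :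
      Set.InjOn f.1 S ↔ Function.Injective (preimageSplitEquiv p S f).1 := by
    rw [Set.injOn_iff_injective]
    exact Subtype.val_injective.of_comp_iff (preimageSplitEquiv p S f).1
  have hfiber (f : {f : α → β // ∀ a, p (f a) ↔ a ∈ S}) :
      #{a | f.1 a = b} = #{x | (preimageSplitEquiv p S f).2 x = ⟨b, hb⟩} := by
    have hnotMem : ∀ a ∈ univ.filter (f.1 · = b), a ∉ S := fun a ha haS =>
      hb ((mem_filter.1 ha).2 ▸ (f.2 a).2 haS)
    rw [← subtype_map_of_mem hnotMem, card_map]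
    congr 1
    ext x
    simp [preimageSplitEquiv, Subtype.ext_iff]
  rw [← Fintype.card_subtype, ← Fintype.card_subtype, ← card_coe S,
    ← card_embedding_eq, ← card_congr (Equiv.subtypeInjectiveEquivEmbedding _ _), ← card_prod,
    ← card_congr Equiv.subtypeProdEquivProd]
  exact (card_congr (Equiv.subtypeSubtypeEquivSubtypeInter _ _)).symm.trans
    (card_congr (Equiv.subtypeEquiv (preimageSplitEquiv p S) fun f =>
      and_congr (hinj f) (by rw [hfiber])))

theorem card_filter_card_preimage_eq_fiber_le_one_two_le (p : β → Prop) [DecidablePred p]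
    (b : β) (hb : ¬ p b) (k : ℕ) :
    (#{f : α → β | #{a | p (f a)} = k ∧ (∀ c, p c → #{a | f a = c} ≤ 1) ∧
        2 ≤ #{a | f a = b}} : ℤ)
      = (card α).choose k * ((card {b // p b}).descFactorial k *
        ((card {b // ¬ p b} : ℤ) ^ (card α - k)
          - ((card {b // ¬ p b} : ℤ) - 1) ^ (card α - k)
          - ((card α : ℤ) - k) * ((card {b // ¬ p b} : ℤ) - 1) ^ (card α - k - 1))) := by
  rw [card_eq_sum_card_fiberwise (f := fun f => univ.filter fun a => p (f a))
    (t := powersetCard k univ) (fun f hf => by simpa using (mem_filter.1 hf).2.1)]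
  push_cast
  have hchoose : (card α).choose k = #(powersetCard k (univ : Finset α)) := by
    rw [card_powersetCard, card_univ]
  rw [hchoose, ← nsmul_eq_mul]
  refine sum_eq_card_nsmul fun S hS => ?_
  rw [mem_powersetCard_univ] at hS
  have hfiber (f : α → β) : ((#{a | p (f a)} = k ∧ (∀ c, p c → #{a | f a = c} ≤ 1) ∧
      2 ≤ #{a | f a = b}) ∧ univ.filter (fun a => p (f a)) = S)
      ↔ (∀ a, p (f a) ↔ a ∈ S) ∧ Set.InjOn f S ∧ 2 ≤ #{a | f a = b} := by
    have hpre : univ.filter (fun a => p (f a)) = S ↔ ∀ a, p (f a) ↔ a ∈ S := by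
      simp [Finset.ext_iff]
    constructor
    · rintro ⟨⟨-, hinj, hcoll⟩, hS'⟩
      have hpre := hpre.1 hS'
      exact ⟨hpre, (Set.injOn_iff_card_fiber_le_one hpre).2 hinj, hcoll⟩
    · rintro ⟨hpre', hinj, hcoll⟩
      have hS' := hpre.2 hpre'
      exact ⟨⟨by rw [hS', hS], (Set.injOn_iff_card_fiber_le_one hpre').1 hinj, hcoll⟩, hS'⟩
  have hk : k ≤ card α := hS ▸ card_le_univ S
  rw [filter_filter, filter_congr fun f _ => hfiber f,
    card_filter_preimage_eq_injOn_two_le p b hb S, Nat.cast_mul, card_filter_two_le_card_fiber,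
    card_subtype_compl (· ∈ S), card_coe, hS, Nat.cast_sub hk]

end FiberCount

theorem stmt2_general (U L s g : ℕ) (hL : s + g + 1 ≤ L) :
    ((Finset.univ.filter (fun f : Fin U → Fin L =>
        (∀ l : Fin L, (l : ℕ) < s + g → levelCount f l ≤ 1) ∧
        (Finset.univ.filter
          (fun l : Fin L => (l : ℕ) < s + g ∧ levelCount f l = 1)).card = s ∧
        2 ≤ levelCount f ⟨s + g, lt_of_lt_of_le (Nat.lt_succ_self _) hL⟩)).card : ℤ)
    = (U.choose s : ℤ) * (Nat.factorial s : ℤ) * ((s + g).choose s : ℤ) *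
        (((L : ℤ) - s - g) ^ (U - s) - ((L : ℤ) - s - g - 1) ^ (U - s)
          - ((U : ℤ) - s) * ((L : ℤ) - s - g - 1) ^ (U - s - 1)) := by
  have hlow : card {l : Fin L // (l : ℕ) < s + g} = s + g := card_fin_lt_of_le (by omega)
  have hhigh : card {l : Fin L // ¬ (l : ℕ) < s + g} = L - (s + g) := by
    rw [card_subtype_compl, hlow, Fintype.card_fin]
  have key := card_filter_card_preimage_eq_fiber_le_one_two_le (α := Fin U)
    (fun l : Fin L => (l : ℕ) < s + g) ⟨s + g, by omega⟩ (lt_irrefl _) s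
  rw [hlow, hhigh, Fintype.card_fin, Nat.descFactorial_eq_factorial_mul_choose,
    Nat.cast_sub (by omega)] at key
  refine Eq.trans ?_ (key.trans ?_)
  · congr 2
    ext f
    simp only [mem_filter, Finset.mem_univ, true_and]
    constructor
    · rintro ⟨hle, hone, hcoll⟩
      exact ⟨(card_filter_card_fiber_eq_one hle).symm.trans hone, hle, hcoll⟩
    · rintro ⟨hlow, hle, hcoll⟩
      exact ⟨hle, (card_filter_card_fiber_eq_one hle).trans hlow, hcoll⟩
  · push_cast
    ring

/-- Equation (6) in Appendix A: the number of level assignments in which each of the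
`s+g` highest-power levels contains at most one packet, exactly `s` of them contain
exactly one packet (so `g` are idle), and the next level (the paper's level `s+g+1`,
index `s+g`) contains a power collision (at least two packets). -/
theorem stmt2 (U L s g : ℕ) (hs : 1 ≤ s) (hsU : s < U) (hg : 0 ≤ g) (hL : s + g + 1 ≤ L) :
    ((Finset.univ.filter (fun f : Fin U → Fin L =>
        (∀ l : Fin L, (l : ℕ) < s + g → levelCount f l ≤ 1) ∧
        (Finset.univ.filter
          (fun l : Fin L => (l : ℕ) < s + g ∧ levelCount f l = 1)).card = s ∧
        2 ≤ levelCount f ⟨s + g, lt_of_lt_of_le (Nat.lt_succ_self _) hL⟩)).card : ℤ)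
    = (U.choose s : ℤ) * (Nat.factorial s : ℤ) * ((s + g).choose s : ℤ) *
        (((L : ℤ) - s - g) ^ (U - s) - ((L : ℤ) - s - g - 1) ^ (U - s)
          - ((U : ℤ) - s) * ((L : ℤ) - s - g - 1) ^ (U - s - 1)) :=
  stmt2_general U L s g hL
end

section
/- Let U ≥ 1 packets each independently and uniformly at random choose one of N ≥ 1 channels and one of L ≥ 1 power levels, modeled as a uniform random function F : {1,…,U} → {1,…,N}×{1,…,L}. For each channel n let S_n(F) be the SIC success count of the power-level choices of those packets that selected channel n, and let T(F) = Σ_{n=1}^N S_n(F) be the total number of successful packets. Then E[T] = N · Σ_{u=1}^U E_u · C(U,u) · (1/N)^u · (1 − 1/N)^{U−u}, where E_u = L^{−u} · Σ_{g : {1,…,u} → {1,…,L}} S(g) is the average success count on a single channel contended by exactly u packets (Theorem 2). -/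
/-- SIC success count of a power-level assignment `g : Fin u → Fin L`
(levels indexed `0, …, L-1` from highest to lowest received power): the number of
levels containing exactly one packet and such that every higher-power level
contains at most one packet. -/
def sicSuccess {u L : ℕ} (g : Fin u → Fin L) : ℕ :=
  (Finset.univ.filter (fun l : Fin L =>
    (Finset.univ.filter (fun k => g k = l)).card = 1 ∧
    ∀ l', l' < l → (Finset.univ.filter (fun k => g k = l')).card ≤ 1)).card

/-- SIC success count on channel `n` for a joint channel-and-level assignment
`F : Fin U → Fin N × Fin L`. -/
def chanSuccess {U N L : ℕ} (F : Fin U → Fin N × Fin L) (n : Fin N) : ℕ :=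
  (Finset.univ.filter (fun l : Fin L =>
    (Finset.univ.filter (fun u => F u = (n, l))).card = 1 ∧
    ∀ l', l' < l → (Finset.univ.filter (fun u => F u = (n, l'))).card ≤ 1)).card

/-!
Fix a channel `n` and sort the assignments `F` by the set `A` of packets that choose `n`. The
success count on `n` only sees the levels of the packets in `A`, while the packets outside `A`
choose freely among the `(N - 1) L` remaining channel-level pairs. So the class of `A`
contributes `((N - 1) L) ^ (U - #A) * ∑ g : A → levels, S g`, which depends on `A` only through
`#A`; grouping by `#A = u` produces the binomial coefficients, and the term `u = 0` vanishes.
Every channel gives the same sum, and dividing by `(N L) ^ U` yields the formula.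
-/

open Finset

/-- Definitionally, `sicSuccess g = sicSuccessOn g` and `chanSuccess F n` is the `sicCount` of the
level occupancies of channel `n`. -/
def sicCount {L : ℕ} (c : Fin L → ℕ) : ℕ :=
  #{l | c l = 1 ∧ ∀ l' < l, c l' ≤ 1}

def sicSuccessOn {α : Type*} [Fintype α] {L : ℕ} (g : α → Fin L) : ℕ :=
  sicCount fun l => #{k | g k = l}

theorem sicSuccess_fin_zero {L : ℕ} (g : Fin 0 → Fin L) : sicSuccess g = 0 := by
  simp [sicSuccess]

theorem sicSuccessOn_comp_equiv {α β : Type*} [Fintype α] [Fintype β] {L : ℕ} (e : β ≃ α)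
    (g : α → Fin L) : sicSuccessOn (g ∘ e) = sicSuccessOn g := by
  unfold sicSuccessOn
  congr 1
  funext l
  simp only [← Fintype.card_subtype]
  exact Fintype.card_congr (e.subtypeEquiv fun _ => Iff.rfl)

theorem sum_sicSuccessOn_congr {α β : Type*} [Fintype α] [Fintype β] [DecidableEq α]
    [DecidableEq β] {L : ℕ} (e : α ≃ β) :
    ∑ g : α → Fin L, sicSuccessOn g = ∑ g : β → Fin L, sicSuccessOn g :=
  Fintype.sum_equiv (e.arrowCongr (Equiv.refl _)) _ _
    fun g => (sicSuccessOn_comp_equiv e.symm g).symm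

theorem chanSuccess_eq_sicSuccessOn {U N L : ℕ} {F : Fin U → Fin N × Fin L} {n : Fin N}
    {A : Finset (Fin U)} (hF : ∀ u, (F u).1 = n ↔ u ∈ A) :
    chanSuccess F n = sicSuccessOn fun a : A => (F a).2 := by
  change sicCount _ = sicCount _
  congr 1
  funext l
  simp only [← Fintype.card_subtype]
  refine Fintype.card_congr
    ((Equiv.subtypeSubtypeEquivSubtypeInter (· ∈ A) fun u => (F u).2 = l).trans
      (Equiv.subtypeEquivRight fun u => ?_)).symm
  simp only [Prod.ext_iff, hF]

def channelSplitEquiv {ι κ β : Type*} [DecidableEq ι] (n : κ) (A : Finset ι) :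
    {F : ι → κ × β // ∀ u, (F u).1 = n ↔ u ∈ A} ≃
      (A → β) × ({u // u ∉ A} → {m // m ≠ n} × β) where
  toFun F := (fun a => (F.1 a).2, fun b => (⟨(F.1 b).1, fun h => b.2 ((F.2 b).1 h)⟩, (F.1 b).2))
  invFun p := ⟨fun u => if hu : u ∈ A then (n, p.1 ⟨u, hu⟩) else ((p.2 ⟨u, hu⟩).1, (p.2 ⟨u, hu⟩).2),
    fun u => by
      by_cases hu : u ∈ A
      · simp [hu]
      · simpa [hu] using (p.2 ⟨u, hu⟩).1.2⟩
  left_inv := by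
    rintro ⟨F, hF⟩
    ext u : 2
    by_cases hu : u ∈ A
    · simp [hu, Prod.ext_iff, (hF u).2 hu]
    · simp [hu]
  right_inv := by
    rintro ⟨g, h⟩
    ext b
    · simp
    · simp [b.2]
    · simp [b.2]

theorem sum_chanSuccess_of_channel_preimage {U N L : ℕ} (n : Fin N) (A : Finset (Fin U)) :
    ∑ F with ({u | (F u).1 = n} : Finset (Fin U)) = A, chanSuccess (L := L) F n
      = ((N - 1) * L) ^ (U - #A) * ∑ g : Fin #A → Fin L, sicSuccess g := by
  rw [sum_subtype _ (p := fun F => ∀ u, (F u).1 = n ↔ u ∈ A) (by simp [Finset.ext_iff]),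
    Fintype.sum_equiv (channelSplitEquiv n A) _ (fun p => sicSuccessOn p.1)
      (fun F => chanSuccess_eq_sicSuccessOn F.2), Fintype.sum_prod_type]
  simp only [sum_const, card_univ, smul_eq_mul, ← mul_sum]
  congr 1
  · simp [Fintype.card_subtype_compl, Nat.sub_one_mul]
  · exact sum_sicSuccessOn_congr A.equivFin

theorem sum_chanSuccess {U N L : ℕ} (n : Fin N) :
    ∑ F : Fin U → Fin N × Fin L, chanSuccess F n
      = ∑ u ∈ Icc 1 U,
          U.choose u * (((N - 1) * L) ^ (U - u) * ∑ g : Fin u → Fin L, sicSuccess g) := by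
  rw [← sum_fiberwise univ (fun F => ({u | (F u).1 = n} : Finset (Fin U))),
    sum_congr rfl fun A _ => sum_chanSuccess_of_channel_preimage n A, ← powerset_univ,
    sum_powerset_apply_card (fun k => ((N - 1) * L) ^ (U - k) * ∑ g : Fin k → Fin L, sicSuccess g),
    card_univ, Fintype.card_fin, range_eq_Ico, sum_eq_sum_Ico_succ_bot U.succ_pos]
  simp [sicSuccess_fin_zero, Ico_add_one_right_eq_Icc]

theorem binomial_term_div {N L C R : ℝ} {u U : ℕ} (hu : u ≤ U) (hN : N ≠ 0) (hL : L ≠ 0) :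
    C * (((N - 1) * L) ^ (U - u) * R) / (N * L) ^ U
      = (L ^ u)⁻¹ * R * C * (1 / N) ^ u * (1 - 1 / N) ^ (U - u) := by
  obtain ⟨k, rfl⟩ := Nat.exists_eq_add_of_le hu
  rw [Nat.add_sub_cancel_left, pow_add, one_sub_div hN, div_pow, div_pow, one_pow, mul_pow,
    mul_pow]
  field_simp
  ring

theorem stmt3_general (U N L : ℕ) (hN : 1 ≤ N) (hL : 1 ≤ L) :
    (∑ F : Fin U → Fin N × Fin L, (∑ n : Fin N, (chanSuccess F n : ℝ)))
        / ((N : ℝ) * (L : ℝ)) ^ U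
    = (N : ℝ) * ∑ u ∈ Finset.Icc 1 U,
        (((L : ℝ) ^ u)⁻¹ * ∑ g : Fin u → Fin L, (sicSuccess g : ℝ)) *
        (U.choose u : ℝ) * ((1 : ℝ) / N) ^ u * (1 - 1 / (N : ℝ)) ^ (U - u) := by
  have hsum (n : Fin N) : ∑ F : Fin U → Fin N × Fin L, (chanSuccess F n : ℝ)
      = ∑ u ∈ Icc 1 U, (U.choose u : ℝ) *
          ((((N : ℝ) - 1) * L) ^ (U - u) * ∑ g : Fin u → Fin L, (sicSuccess g : ℝ)) := by
    exact_mod_cast sum_chanSuccess n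
  have hN0 : (N : ℝ) ≠ 0 := Nat.cast_ne_zero.2 (by omega)
  have hL0 : (L : ℝ) ≠ 0 := Nat.cast_ne_zero.2 (by omega)
  rw [sum_comm, sum_congr rfl fun n _ => hsum n, sum_const, card_univ, Fintype.card_fin,
    nsmul_eq_mul, mul_div_assoc, sum_div]
  congr 1
  exact sum_congr rfl fun u hu => binomial_term_div (mem_Icc.1 hu).2 hN0 hL0

/-- Theorem 2: with `U` packets choosing uniformly at random among `N` channels and
`L` power levels, the expected total number of successful packets
`E[T] = N · Σ_{u=1}^U E_u · C(U,u) · (1/N)^u · (1 − 1/N)^{U−u}`, where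
`E_u = L^{-u} · Σ_{g} S(g)` is the average success count of a single channel
contended by exactly `u` packets. -/
theorem stmt3 (U N L : ℕ) (hU : 1 ≤ U) (hN : 1 ≤ N) (hL : 1 ≤ L) :
    (∑ F : Fin U → Fin N × Fin L, (∑ n : Fin N, (chanSuccess F n : ℝ)))
        / ((N : ℝ) * (L : ℝ)) ^ U
    = (N : ℝ) * ∑ u ∈ Finset.Icc 1 U,
        (((L : ℝ) ^ u)⁻¹ * ∑ g : Fin u → Fin L, (sicSuccess g : ℝ)) *
        (U.choose u : ℝ) * ((1 : ℝ) / N) ^ u * (1 - 1 / (N : ℝ)) ^ (U - u) :=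
  stmt3_general U N L hN hL
end

section
/- Fix λ > 0 and an integer L ≥ 1. The expected number of successfully decoded power levels on one channel under independent Poisson(λ) arrivals per level equals Σ_{i=1}^L λe^{−λ}·(e^{−λ} + λe^{−λ})^{i−1}; that is, ∑'_{k : {1,…,L} → ℕ} w(k) · |{ i : k_i = 1 and k_j ≤ 1 for all j < i }| = Σ_{i=1}^L λe^{−λ}·(e^{−λ} + λe^{−λ})^{i−1} (Theorem 3, per-channel form; the N-channel throughput is N times this quantity). -/
/-- Poisson probability weight of an arrival configuration `k : Fin L → ℕ`
(independent Poisson(λ) arrivals per power level). -/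
noncomputable def poissonWeight (L : ℕ) (lam : ℝ) (k : Fin L → ℕ) : ℝ :=
  ∏ i, lam ^ (k i) * Real.exp (-lam) / (Nat.factorial (k i))

/-- Number of successfully decoded levels under SIC for configuration `k`: level `i`
(indexed `0, …, L-1` from highest to lowest power) is successful iff `k i = 1` and
`k j ≤ 1` for all higher-power levels `j < i`. -/
def successCount (L : ℕ) (k : Fin L → ℕ) : ℕ :=
  (Finset.univ.filter (fun i : Fin L => k i = 1 ∧ ∀ j, j < i → k j ≤ 1)).card

namespace SicAux

noncomputable def pw (lam : ℝ) (n : ℕ) : ℝ :=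
  lam ^ n * Real.exp (-lam) / (Nat.factorial n)

lemma pw_nonneg {lam : ℝ} (h : 0 < lam) (n : ℕ) : 0 ≤ pw lam n := by
  unfold pw; positivity

lemma pw_eq (lam : ℝ) (n : ℕ) : pw lam n = Real.exp (-lam) * (lam ^ n / n.factorial) := by
  unfold pw; ring

lemma summable_pw (lam : ℝ) : Summable (pw lam) := by
  have h := (Real.summable_pow_div_factorial lam).mul_left (Real.exp (-lam))
  exact h.congr fun n => (pw_eq lam n).symm

lemma tsum_pw (lam : ℝ) : ∑' n, pw lam n = 1 := by
  have h1 : ∑' n : ℕ, (lam ^ n / n.factorial : ℝ) = Real.exp lam := by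
    rw [Real.exp_eq_exp_ℝ, NormedSpace.exp_eq_tsum_div]
  calc ∑' n, pw lam n = ∑' n, Real.exp (-lam) * (lam ^ n / n.factorial) := by
        exact tsum_congr (pw_eq lam)
    _ = Real.exp (-lam) * ∑' n : ℕ, (lam ^ n / n.factorial : ℝ) := tsum_mul_left
    _ = 1 := by rw [h1, ← Real.exp_add]; simp

lemma poissonWeight_cons (L : ℕ) (lam : ℝ) (n : ℕ) (f : Fin L → ℕ) :
    poissonWeight (L + 1) lam (Fin.cons n f) = pw lam n * poissonWeight L lam f := by
  unfold poissonWeight pw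
  rw [Fin.prod_univ_succ]
  simp [Fin.cons_zero, Fin.cons_succ]

lemma poissonWeight_nonneg {lam : ℝ} (h : 0 < lam) (L : ℕ) (k : Fin L → ℕ) :
    0 ≤ poissonWeight L lam k := by
  unfold poissonWeight
  exact Finset.prod_nonneg fun i _ => by positivity

lemma summable_poissonWeight (lam : ℝ) (hlam : 0 < lam) (L : ℕ) :
    Summable (poissonWeight L lam) := by
  induction L with
  | zero => exact summable_of_finite_support (Set.toFinite _)
  | succ L ih =>
    have h : Summable (fun p : ℕ × (Fin L → ℕ) => pw lam p.1 * poissonWeight L lam p.2) :=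
      (summable_pw lam).mul_of_nonneg ih (fun n => pw_nonneg hlam n)
        (fun k => poissonWeight_nonneg hlam L k)
    refine ((Fin.consEquiv fun _ : Fin (L+1) => ℕ).summable_iff
      (f := poissonWeight (L+1) lam)).mp (h.congr fun p => ?_)
    exact (poissonWeight_cons L lam p.1 p.2).symm

lemma tsum_poissonWeight (lam : ℝ) (hlam : 0 < lam) (L : ℕ) :
    ∑' k : Fin L → ℕ, poissonWeight L lam k = 1 := by
  induction L with
  | zero =>
    have : poissonWeight 0 lam = fun _ => 1 := by
      funext k; unfold poissonWeight; simp
    rw [this]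
    exact tsum_eq_single (fun i : Fin 0 => 0)
      (fun b hb => absurd (funext fun i => i.elim0) hb)
  | succ L ih =>
    rw [← (Fin.consEquiv (fun _ : Fin (L+1) => ℕ)).tsum_eq]
    have he : ∀ p : ℕ × (Fin L → ℕ),
        poissonWeight (L+1) lam ((Fin.consEquiv _) p) = pw lam p.1 * poissonWeight L lam p.2 := by
      intro p; simp [Fin.consEquiv, poissonWeight_cons]
    rw [tsum_congr he, ← Summable.tsum_mul_tsum (summable_pw lam) (summable_poissonWeight lam hlam L)
      ((summable_pw lam).mul_of_nonneg (summable_poissonWeight lam hlam L)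
        (fun n => pw_nonneg hlam n) (fun k => poissonWeight_nonneg hlam L k))]
    rw [tsum_pw, ih, mul_one]

lemma successCount_le (L : ℕ) (k : Fin L → ℕ) : successCount L k ≤ L := by
  unfold successCount
  calc _ ≤ (Finset.univ : Finset (Fin L)).card := Finset.card_filter_le _ _
    _ = L := by simp

lemma successCount_cons (L : ℕ) (n : ℕ) (f : Fin L → ℕ) :
    successCount (L + 1) (Fin.cons n f)
      = (if n = 1 then 1 else 0) + (if n ≤ 1 then successCount L f else 0) := by
  unfold successCount
  rw [Finset.card_filter, Finset.card_filter, Fin.sum_univ_succ]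
  congr 1
  · simp only [Fin.cons_zero]
    congr 1
    simp only [eq_iff_iff]
    exact ⟨fun h => h.1,
      fun h => ⟨h, fun j hj => absurd (Fin.lt_def.mp hj) (by simp)⟩⟩
  · have key : ∀ i : Fin L,
        ((Fin.cons n f : Fin (L+1) → ℕ) i.succ = 1 ∧
          ∀ j, j < i.succ → (Fin.cons n f : Fin (L+1) → ℕ) j ≤ 1)
        ↔ (n ≤ 1 ∧ (f i = 1 ∧ ∀ j, j < i → f j ≤ 1)) := by
      intro i
      simp only [Fin.cons_succ]
      constructor
      · rintro ⟨h1, h2⟩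
        refine ⟨?_, h1, fun j hj => ?_⟩
        · have := h2 0 (Fin.succ_pos i)
          simpa using this
        · have := h2 j.succ (by simpa [Fin.succ_lt_succ_iff] using hj)
          simpa using this
      · rintro ⟨hn, h1, h2⟩
        refine ⟨h1, fun j hj => ?_⟩
        rcases Fin.eq_zero_or_eq_succ j with h0 | ⟨j', rfl⟩
        · subst h0; simpa using hn
        · have : j' < i := by simpa [Fin.succ_lt_succ_iff] using hj
          simpa using h2 j' this
    rw [Finset.sum_congr rfl (fun i _ => by rw [if_congr (key i) rfl rfl])]
    by_cases hn : n ≤ 1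
    · simp [hn]
    · simp [hn]

lemma summable_poissonWeight_mul_count (lam : ℝ) (hlam : 0 < lam) (L : ℕ) :
    Summable (fun k : Fin L → ℕ => poissonWeight L lam k * (successCount L k : ℝ)) := by
  refine Summable.of_nonneg_of_le
    (fun k => mul_nonneg (poissonWeight_nonneg hlam L k) (by positivity))
    (fun k => ?_) ((summable_poissonWeight lam hlam L).mul_right (L : ℝ))
  have h1 : (successCount L k : ℝ) ≤ L := by exact_mod_cast successCount_le L k
  exact mul_le_mul_of_nonneg_left h1 (poissonWeight_nonneg hlam L k)

end SicAux

open SicAux in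
/-- Theorem 3 (per-channel form): the expected number of successfully decoded levels
on one channel under independent Poisson(λ) arrivals per level equals
`Σ_{i=1}^L λe^{−λ}·(e^{−λ} + λe^{−λ})^{i−1}`. -/
theorem stmt4 (lam : ℝ) (hlam : 0 < lam) (L : ℕ) (hL : 1 ≤ L) :
    ∑' k : Fin L → ℕ, poissonWeight L lam k * (successCount L k : ℝ)
    = ∑ i ∈ Finset.range L,
        lam * Real.exp (-lam) * (Real.exp (-lam) + lam * Real.exp (-lam)) ^ i := by
  clear hL
  induction L with
  | zero =>
    have : ∀ k : Fin 0 → ℕ, poissonWeight 0 lam k * (successCount 0 k : ℝ) = 0 := by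
      intro k; unfold successCount; simp
    rw [tsum_congr this]; simp
  | succ L ih =>
    -- split first coordinate
    rw [← (Fin.consEquiv (fun _ : Fin (L+1) => ℕ)).tsum_eq]
    have he : ∀ p : ℕ × (Fin L → ℕ),
        poissonWeight (L+1) lam ((Fin.consEquiv _) p)
          * (successCount (L+1) ((Fin.consEquiv _) p) : ℝ)
        = (pw lam p.1 * (if p.1 = 1 then 1 else 0)) * poissonWeight L lam p.2
          + (pw lam p.1 * (if p.1 ≤ 1 then 1 else 0))
              * (poissonWeight L lam p.2 * (successCount L p.2 : ℝ)) := by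
      rintro ⟨n, f⟩
      have h1 : (Fin.consEquiv (fun _ : Fin (L+1) => ℕ)) (n, f) = Fin.cons n f := rfl
      rw [h1, poissonWeight_cons, successCount_cons]
      by_cases hn1 : n = 1 <;> by_cases hn2 : n ≤ 1 <;> simp [hn1, hn2] <;> ring
    rw [tsum_congr he]
    -- summabilities
    have hA : Summable (fun n => pw lam n * (if n = 1 then 1 else 0)) := by
      refine summable_of_ne_finset_zero (s := {1}) fun n hn => ?_
      simp only [Finset.mem_singleton] at hn
      simp [hn]
    have hC : Summable (fun n => pw lam n * (if n ≤ 1 then 1 else 0)) := by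
      refine summable_of_ne_finset_zero (s := {0, 1}) fun n hn => ?_
      simp only [Finset.mem_insert, Finset.mem_singleton] at hn
      push_neg at hn
      have : ¬ n ≤ 1 := by omega
      simp [this]
    have hB := summable_poissonWeight lam hlam L
    have hD := summable_poissonWeight_mul_count lam hlam L
    have hAnn : ∀ n, 0 ≤ pw lam n * (if n = 1 then 1 else 0) := fun n =>
      mul_nonneg (pw_nonneg hlam n) (by positivity)
    have hCnn : ∀ n, 0 ≤ pw lam n * (if n ≤ 1 then 1 else 0) := fun n =>
      mul_nonneg (pw_nonneg hlam n) (by positivity)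
    have hBnn : ∀ k, 0 ≤ poissonWeight L lam k := poissonWeight_nonneg hlam L
    have hDnn : ∀ k, 0 ≤ poissonWeight L lam k * (successCount L k : ℝ) := fun k =>
      mul_nonneg (hBnn k) (by positivity)
    have hAB := hA.mul_of_nonneg hB hAnn hBnn
    have hCD := hC.mul_of_nonneg hD hCnn hDnn
    rw [Summable.tsum_add hAB hCD, ← Summable.tsum_mul_tsum hA hB hAB, ← Summable.tsum_mul_tsum hC hD hCD,
      tsum_poissonWeight lam hlam L, ih]
    -- evaluate the two small tsums
    have hTA : ∑' n, pw lam n * (if n = 1 then 1 else 0) = lam * Real.exp (-lam) := by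
      rw [tsum_eq_single 1 (fun n hn => by simp [hn])]
      simp [pw]
    have hTC : ∑' n, pw lam n * (if n ≤ 1 then 1 else 0)
        = Real.exp (-lam) + lam * Real.exp (-lam) := by
      rw [tsum_eq_sum (s := {0, 1}) (f := fun n => pw lam n * (if n ≤ 1 then 1 else 0))
        (fun n hn => ?_)]
      · simp [pw]
      · simp only [Finset.mem_insert, Finset.mem_singleton] at hn
        push_neg at hn
        have : ¬ n ≤ 1 := by omega
        simp [this]
    rw [hTA, hTC, mul_one]
    rw [Finset.sum_range_succ', pow_zero, mul_one, Finset.mul_sum]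
    have hcongr : ∀ i ∈ Finset.range L,
        lam * Real.exp (-lam) * (Real.exp (-lam) + lam * Real.exp (-lam)) ^ (i + 1)
          = (Real.exp (-lam) + lam * Real.exp (-lam))
              * (lam * Real.exp (-lam) * (Real.exp (-lam) + lam * Real.exp (-lam)) ^ i) :=
      fun i _ => by ring
    rw [Finset.sum_congr rfl hcongr]
    ring
end

section
/- For every integer L ≥ 1, sup_{λ > 0} g_{L+1}(λ) > sup_{λ > 0} g_L(λ), where g_L(λ) = Σ_{i=1}^L λe^{−λ}·(e^{−λ} + λe^{−λ})^{i−1}; that is, increasing the number of power levels strictly increases the maximum normalized throughput of NOMA-based random access (the throughput-gain claim of Sections I and V-C, Fig. 5(b)). -/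
/-- Normalized throughput of NOMA-RA with `L` power levels under Poisson(λ) arrivals
per level: `g_L(λ) = Σ_{i=1}^L λe^{−λ}·(e^{−λ} + λe^{−λ})^{i−1}`. -/
noncomputable def gThroughput (L : ℕ) (lam : ℝ) : ℝ :=
  ∑ i ∈ Finset.Icc 1 L,
    lam * Real.exp (-lam) * (Real.exp (-lam) + lam * Real.exp (-lam)) ^ (i - 1)

lemma q_le_one {l : ℝ} (hl : 0 ≤ l) : Real.exp (-l) + l * Real.exp (-l) ≤ 1 := by
  have h := Real.add_one_le_exp l
  have he : 0 < Real.exp (-l) := Real.exp_pos _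
  have h1 : Real.exp l * Real.exp (-l) = 1 := by
    rw [← Real.exp_add]; simp
  nlinarith

lemma le_exp_self {l : ℝ} (hl : 0 ≤ l) : l * Real.exp (-l) ≤ 1 := by
  have h := Real.add_one_le_exp l
  have he : 0 < Real.exp (-l) := Real.exp_pos _
  have h1 : Real.exp l * Real.exp (-l) = 1 := by
    rw [← Real.exp_add]; simp
  nlinarith

lemma g_le (L : ℕ) {l : ℝ} (hl : 0 ≤ l) :
    gThroughput L l ≤ (L : ℝ) * (l * Real.exp (-l)) := by
  unfold gThroughput
  calc ∑ i ∈ Finset.Icc 1 L,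
        l * Real.exp (-l) * (Real.exp (-l) + l * Real.exp (-l)) ^ (i - 1)
      ≤ ∑ _i ∈ Finset.Icc 1 L, l * Real.exp (-l) := by
        apply Finset.sum_le_sum
        intro i _
        have hq0 : 0 ≤ Real.exp (-l) + l * Real.exp (-l) := by positivity
        have hq1 := q_le_one hl
        have hpow : (Real.exp (-l) + l * Real.exp (-l)) ^ (i - 1) ≤ 1 :=
          pow_le_one₀ hq0 hq1
        have hne : 0 ≤ l * Real.exp (-l) := by positivity
        nlinarith [pow_nonneg hq0 (i - 1)]
    _ = (L : ℝ) * (l * Real.exp (-l)) := by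
        rw [Finset.sum_const, Nat.card_Icc]
        simp [nsmul_eq_mul]
  
lemma g_le' (L : ℕ) {l : ℝ} (hl : 0 ≤ l) : gThroughput L l ≤ (L : ℝ) := by
  calc gThroughput L l ≤ (L : ℝ) * (l * Real.exp (-l)) := g_le L hl
    _ ≤ (L : ℝ) * 1 := by
        apply mul_le_mul_of_nonneg_left (le_exp_self hl) (by positivity)
    _ = L := mul_one _

lemma g_bddAbove (L : ℕ) : BddAbove (gThroughput L '' Set.Ioi (0 : ℝ)) := by
  refine ⟨(L : ℝ), ?_⟩
  rintro y ⟨x, hx, rfl⟩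
  exact g_le' L (le_of_lt hx)

lemma g_pos (L : ℕ) (hL : 1 ≤ L) {l : ℝ} (hl : 0 < l) : 0 < gThroughput L l := by
  unfold gThroughput
  apply Finset.sum_pos
  · intro i _
    positivity
  · exact ⟨1, by simp [Finset.mem_Icc, hL]⟩

lemma g_succ (L : ℕ) (l : ℝ) :
    gThroughput (L + 1) l =
      gThroughput L l +
        l * Real.exp (-l) * (Real.exp (-l) + l * Real.exp (-l)) ^ L := by
  unfold gThroughput
  rw [Finset.sum_Icc_succ_top (by omega : 1 ≤ L + 1)]
  simp

lemma g_continuous (L : ℕ) : Continuous (gThroughput L) := by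
  unfold gThroughput
  apply continuous_finset_sum
  intro i _
  fun_prop

/-- Sections I and V-C (Fig. 5(b)): increasing the number of power levels strictly
increases the maximum normalized throughput:
`sup_{L>0} g_{L+1}(λ) > sup_{λ>0} g_L(λ)`. -/
theorem stmt11 (L : ℕ) (hL : 1 ≤ L) :
    sSup (gThroughput (L + 1) '' Set.Ioi (0 : ℝ))
      > sSup (gThroughput L '' Set.Ioi (0 : ℝ)) := by
  -- set up the threshold
  have hg1 : 0 < gThroughput L 1 := g_pos L hL one_pos
  have hLpos : (0 : ℝ) < L := by exact_mod_cast hL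
  have heps : 0 < gThroughput L 1 / L := div_pos hg1 hLpos
  -- eventually l * exp (-l) < ε
  have htend : Filter.Tendsto (fun x : ℝ => x * Real.exp (-x)) Filter.atTop (nhds 0) := by
    have := Real.tendsto_pow_mul_exp_neg_atTop_nhds_zero 1
    simpa using this
  have hev : ∀ᶠ x in Filter.atTop, x * Real.exp (-x) < gThroughput L 1 / L := by
    exact htend.eventually_lt_const heps
  obtain ⟨M, hM⟩ := hev.exists_forall_of_atTop
  set M' : ℝ := max M 1 with hM'def
  have hM'1 : (1 : ℝ) ≤ M' := le_max_right _ _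
  -- extreme value theorem on [0, M']
  have hcpt : IsCompact (Set.Icc (0 : ℝ) M') := isCompact_Icc
  obtain ⟨lam, hlam_mem, hlam_max⟩ :=
    hcpt.exists_isMaxOn ⟨0, by constructor <;> [rfl; linarith]⟩
      (g_continuous L).continuousOn
  have h1mem : (1 : ℝ) ∈ Set.Icc (0 : ℝ) M' := ⟨zero_le_one, hM'1⟩
  have hlam_ge1 : gThroughput L 1 ≤ gThroughput L lam := hlam_max h1mem
  have hlam_pos : 0 < lam := by
    by_contra h
    push_neg at h
    have h0 : lam = 0 := le_antisymm h hlam_mem.1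
    have : gThroughput L 0 = 0 := by simp [gThroughput]
    rw [h0, this] at hlam_ge1
    linarith
  -- gThroughput L lam is an upper bound of the image
  have hub : ∀ y ∈ gThroughput L '' Set.Ioi (0 : ℝ), y ≤ gThroughput L lam := by
    rintro y ⟨x, hx, rfl⟩
    rcases le_or_gt x M' with hxM | hxM
    · exact hlam_max ⟨le_of_lt hx, hxM⟩
    · have hxM2 : M ≤ x := le_trans (le_max_left _ _) (le_of_lt hxM)
      have hx0 : (0 : ℝ) ≤ x := le_of_lt hx
      calc gThroughput L x ≤ (L : ℝ) * (x * Real.exp (-x)) := g_le L hx0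
        _ ≤ (L : ℝ) * (gThroughput L 1 / L) := by
            apply mul_le_mul_of_nonneg_left (le_of_lt (hM x hxM2)) (le_of_lt hLpos)
        _ = gThroughput L 1 := by field_simp
        _ ≤ gThroughput L lam := hlam_ge1
  -- sSup of L-image equals gThroughput L lam
  have hsup_le : sSup (gThroughput L '' Set.Ioi (0 : ℝ)) ≤ gThroughput L lam :=
    csSup_le ⟨gThroughput L 1, ⟨1, Set.mem_Ioi.mpr one_pos, rfl⟩⟩ hub
  -- strict pointwise gain at lam
  have hgain : gThroughput L lam < gThroughput (L + 1) lam := by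
    rw [g_succ]
    have : 0 < lam * Real.exp (-lam) *
        (Real.exp (-lam) + lam * Real.exp (-lam)) ^ L := by positivity
    linarith
  -- conclude
  have hle : gThroughput (L + 1) lam ≤ sSup (gThroughput (L + 1) '' Set.Ioi (0 : ℝ)) :=
    le_csSup (g_bddAbove (L + 1)) ⟨lam, Set.mem_Ioi.mpr hlam_pos, rfl⟩
  linarith
end

section
/- Fix an integer L ≥ 1 and define P_idle : [0, ∞) → ℝ by P_idle(λ) = (q_0 + q_1)^L − q_1^L + (1 − q_0 − q_1) · Σ_{i=2}^L [ (q_0 + q_1)^{i−1} − q_1^{i−1} ] with q_0 = e^{−λ} and q_1 = λe^{−λ}. Then P_idle is monotonically decreasing (antitone) on [0, ∞), with P_idle(0) = 1 (the monotonicity of the idle-channel probability in the offered load asserted in Section IV-A, which makes the load threshold P^τ_idle = P_idle(λ*) well defined for load estimation). -/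
/-!
Summing the geometric series in `q₁` collapses the closed form to
`P_idle(λ) = ∑_{j<L} λ^j e^{-(j+1)λ}`. Writing `h_k(λ) = k λ^{k-1} e^{-kλ}`, the derivative of the
`j`-th term is `e^{-λ} h_j - h_{j+1}`, which for `λ ≥ 0` is at most `h_j - h_{j+1}`; the sum of
these telescopes to `-h_L ≤ 0`.
-/

/-- Idle-channel probability of Theorem 4, as a function of the offered load `λ`,
with `q₀ = e^{−λ}` and `q₁ = λe^{−λ}`:
`P_idle(λ) = (q₀+q₁)^L − q₁^L + (1 − q₀ − q₁)·Σ_{i=2}^L [(q₀+q₁)^{i−1} − q₁^{i−1}]`. -/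
noncomputable def Pidle (L : ℕ) (lam : ℝ) : ℝ :=
  (Real.exp (-lam) + lam * Real.exp (-lam)) ^ L - (lam * Real.exp (-lam)) ^ L +
    (1 - Real.exp (-lam) - lam * Real.exp (-lam)) *
      ∑ i ∈ Finset.Icc 2 L,
        ((Real.exp (-lam) + lam * Real.exp (-lam)) ^ (i - 1)
          - (lam * Real.exp (-lam)) ^ (i - 1))

open Finset Real

lemma pow_sub_pow_add_one_sub_mul_sum_Icc_eq {R : Type*} [CommRing R] (a b : R) (L : ℕ) :
    a ^ L - b ^ L + (1 - a) * ∑ i ∈ Icc 2 L, (a ^ (i - 1) - b ^ (i - 1))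
      = (a - b) * ∑ j ∈ range L, b ^ j := by
  induction L with
  | zero => simp
  | succ n ih =>
    rcases Nat.eq_zero_or_pos n with rfl | hn
    · simp
    · rw [sum_Icc_succ_top (by omega), sum_range_succ, Nat.add_sub_cancel]
      linear_combination ih

lemma Pidle_eq_sum (L : ℕ) (lam : ℝ) :
    Pidle L lam = ∑ j ∈ range L, lam ^ j * exp (-(j + 1) * lam) := by
  rw [Pidle, sub_sub, pow_sub_pow_add_one_sub_mul_sum_Icc_eq, add_sub_cancel_right, mul_sum]
  refine sum_congr rfl fun j _ => ?_
  rw [show -((j : ℝ) + 1) * lam = (j + 1 : ℕ) * -lam by push_cast; ring, exp_nat_mul]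
  ring

noncomputable def telescopingTerm (k : ℕ) (x : ℝ) : ℝ :=
  k * x ^ (k - 1) * exp (-k * x)

lemma hasDerivAt_pow_mul_exp_neg_succ_mul (j : ℕ) (x : ℝ) :
    HasDerivAt (fun x => x ^ j * exp (-(j + 1) * x))
      (exp (-x) * telescopingTerm j x - telescopingTerm (j + 1) x) x := by
  have hexp : HasDerivAt (fun x => exp (-(j + 1) * x)) (exp (-(j + 1) * x) * -(j + 1)) x := by
    simpa using ((hasDerivAt_id x).const_mul (-((j : ℝ) + 1))).exp
  refine ((hasDerivAt_pow j x).fun_mul hexp).congr_deriv ?_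
  have hsplit : exp (-(j + 1) * x) = exp (-j * x) * exp (-x) := by rw [← exp_add]; ring_nf
  simp only [telescopingTerm, Nat.add_sub_cancel, Nat.cast_succ, hsplit]
  ring

lemma hasDerivAt_Pidle (L : ℕ) (x : ℝ) :
    HasDerivAt (Pidle L)
      (∑ j ∈ range L, (exp (-x) * telescopingTerm j x - telescopingTerm (j + 1) x)) x := by
  rw [funext (Pidle_eq_sum L)]
  exact HasDerivAt.fun_sum fun j _ => hasDerivAt_pow_mul_exp_neg_succ_mul j x

lemma sum_exp_neg_mul_telescopingTerm_sub_nonpos (L : ℕ) {x : ℝ} (hx : 0 ≤ x) :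
    ∑ j ∈ range L, (exp (-x) * telescopingTerm j x - telescopingTerm (j + 1) x) ≤ 0 := by
  have hterm : ∀ k, 0 ≤ telescopingTerm k x := fun k => by
    unfold telescopingTerm; positivity
  calc ∑ j ∈ range L, (exp (-x) * telescopingTerm j x - telescopingTerm (j + 1) x)
      ≤ ∑ j ∈ range L, (telescopingTerm j x - telescopingTerm (j + 1) x) := by
        gcongr with j
        exact mul_le_of_le_one_left (hterm j) (exp_le_one_iff.mpr (neg_nonpos.mpr hx))
    _ = telescopingTerm 0 x - telescopingTerm L x := sum_range_sub' _ L
    _ = -telescopingTerm L x := by simp [telescopingTerm]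
    _ ≤ 0 := neg_nonpos.mpr (hterm L)

lemma antitoneOn_Pidle (L : ℕ) : AntitoneOn (Pidle L) (Set.Ici 0) := by
  refine antitoneOn_of_hasDerivWithinAt_nonpos (convex_Ici 0)
    (fun x _ => (hasDerivAt_Pidle L x).continuousAt.continuousWithinAt)
    (fun x _ => (hasDerivAt_Pidle L x).hasDerivWithinAt) fun x hx => ?_
  rw [interior_Ici] at hx
  exact sum_exp_neg_mul_telescopingTerm_sub_nonpos L (le_of_lt hx)

/-- Section IV-A: the idle-channel probability is monotonically decreasing in the
offered load on `[0, ∞)`, and equals `1` at zero load. -/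
theorem stmt13 (L : ℕ) (hL : 1 ≤ L) :
    AntitoneOn (Pidle L) (Set.Ici (0 : ℝ)) ∧ Pidle L 0 = 1 :=
  ⟨antitoneOn_Pidle L, by simp [Pidle, zero_pow (Nat.one_le_iff_ne_zero.mp hL)]⟩
end
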